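/- arXiv:2505.02792 — 2 statements merged into one kernel-verified Lean document; each statement's English description precedes it below -/
import Mathlib

section
/- For every τ in the upper half-plane ℍ, the function v ↦ θ(v,τ) is complex-differentiable at v = 0 and its derivative there equals θ'(0,τ) = 2π · q^{1/8} · ∏_{r=1}^∞ (1 − q^r)³. -/
open Complex

/-- `qpow τ s = e^{2πisτ}`, i.e. "q^s" where `q = e^{2πiτ}`. -/
noncomputable def qpow (τ s : ℂ) : ℂ := Complex.exp (2 * Real.pi * I * s * τ)

/-- `c(τ) = ∏_{r=1}^∞ (1 - q^r)`. -/
noncomputable def cInf (τ : ℂ) : ℂ := ∏' r : ℕ, (1 - qpow τ (r + 1))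

/-- Jacobi theta function θ. -/
noncomputable def jTheta (v τ : ℂ) : ℂ :=
  cInf τ * qpow τ (1 / 8) * (2 * Complex.sin (Real.pi * v)) *
    ∏' r : ℕ, ((1 - qpow τ (r + 1) * Complex.exp (2 * Real.pi * I * v)) *
      (1 - qpow τ (r + 1) * Complex.exp (-(2 * Real.pi * I * v))))

/-- Jacobi theta function θ₁. -/
noncomputable def jTheta1 (v τ : ℂ) : ℂ :=
  cInf τ * qpow τ (1 / 8) * (2 * Complex.cos (Real.pi * v)) *
    ∏' r : ℕ, ((1 + qpow τ (r + 1) * Complex.exp (2 * Real.pi * I * v)) *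
      (1 + qpow τ (r + 1) * Complex.exp (-(2 * Real.pi * I * v))))

/-- Jacobi theta function θ₂. -/
noncomputable def jTheta2 (v τ : ℂ) : ℂ :=
  cInf τ *
    ∏' r : ℕ, ((1 - qpow τ ((r : ℂ) + 1 / 2) * Complex.exp (2 * Real.pi * I * v)) *
      (1 - qpow τ ((r : ℂ) + 1 / 2) * Complex.exp (-(2 * Real.pi * I * v))))

/-- Jacobi theta function θ₃. -/
noncomputable def jTheta3 (v τ : ℂ) : ℂ :=
  cInf τ *
    ∏' r : ℕ, ((1 + qpow τ ((r : ℂ) + 1 / 2) * Complex.exp (2 * Real.pi * I * v)) *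
      (1 + qpow τ ((r : ℂ) + 1 / 2) * Complex.exp (-(2 * Real.pi * I * v))))

/-- θ'(0,τ), the derivative of `v ↦ θ(v,τ)` at `v = 0`. -/
noncomputable def jThetaDeriv (τ : ℂ) : ℂ := deriv (fun v => jTheta v τ) 0

/-! Writing `F w = ∏_{r ≥ 1} (1 - q^r w)` (`qpowProd τ w`), which is entire because `∑ q^r`
converges, the inner product of `θ` splits as `F(e^{2πiv}) F(e^{-2πiv})` and `c(τ) = F 1`.
Since `sin (π v)` vanishes at `0`, the product rule gives
`θ'(0) = c · q^{1/8} · 2π · F(1)² = 2π q^{1/8} F(1)³`. -/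

section OneSubMul

variable {ι : Type*} {a : ι → ℂ}

lemma multipliable_one_sub_mul (ha : Summable a) (w : ℂ) :
    Multipliable fun i ↦ 1 - a i * w := by
  simpa [sub_eq_add_neg] using Complex.multipliable_one_add_of_summable (ha.mul_right w).neg

lemma differentiable_tprod_one_sub_mul (ha : Summable a) :
    Differentiable ℂ fun w ↦ ∏' i, (1 - a i * w) := by
  intro w₀
  set U := Metric.ball (0 : ℂ) (‖w₀‖ + 1)
  have hU : IsOpen U := Metric.isOpen_ball
  have hw₀ : w₀ ∈ U := mem_ball_zero_iff.mpr (lt_add_one _)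
  have hprod : HasProdLocallyUniformlyOn (fun i w ↦ 1 + -(a i * w))
      (fun w ↦ ∏' i, (1 + -(a i * w))) U :=
    (ha.norm.mul_right (‖w₀‖ + 1)).hasProdLocallyUniformlyOn_one_add hU
      (.of_forall fun i w hw ↦ by
        rw [norm_neg, norm_mul]
        exact mul_le_mul_of_nonneg_left (mem_ball_zero_iff.mp hw).le (norm_nonneg _))
      fun i ↦ by fun_prop
  have hdiff := hprod.differentiableOn (.of_forall fun s ↦ by fun_prop) hU
  simpa [sub_eq_add_neg] using hdiff.differentiableAt (hU.mem_nhds hw₀)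

end OneSubMul

lemma qpow_nat_add_one (τ : ℂ) (r : ℕ) : qpow τ (r + 1) = qpow τ 1 ^ (r + 1) := by
  rw [qpow, qpow, ← Complex.exp_nat_mul]
  push_cast
  ring_nf

lemma norm_qpow_one_lt_one {τ : ℂ} (hτ : 0 < τ.im) : ‖qpow τ 1‖ < 1 := by
  have hre : (2 * Real.pi * I * 1 * τ).re = -(2 * Real.pi * τ.im) := by simp [Complex.mul_re]
  rw [qpow, Complex.norm_exp, Real.exp_lt_one_iff, hre, neg_neg_iff_pos]
  positivity

lemma summable_qpow_nat_add_one {τ : ℂ} (hτ : 0 < τ.im) :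
    Summable fun r : ℕ ↦ qpow τ (r + 1) := by
  simp_rw [qpow_nat_add_one, pow_succ]
  exact (summable_geometric_of_norm_lt_one (norm_qpow_one_lt_one hτ)).mul_right _

noncomputable def qpowProd (τ w : ℂ) : ℂ := ∏' r : ℕ, (1 - qpow τ (r + 1) * w)

lemma tprod_one_sub_qpow_pow {τ : ℂ} (hτ : 0 < τ.im) (n : ℕ) :
    ∏' r : ℕ, (1 - qpow τ (r + 1)) ^ n = qpowProd τ 1 ^ n := by
  simpa [qpowProd] using
    (multipliable_one_sub_mul (summable_qpow_nat_add_one hτ) 1).tprod_pow n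

lemma jTheta_eq_qpowProd {τ : ℂ} (hτ : 0 < τ.im) (v : ℂ) :
    jTheta v τ = qpowProd τ 1 * qpow τ (1 / 8) * (2 * Complex.sin (Real.pi * v) *
      (qpowProd τ (Complex.exp (2 * Real.pi * I * v)) *
        qpowProd τ (Complex.exp (-(2 * Real.pi * I * v))))) := by
  have ha := summable_qpow_nat_add_one hτ
  simp only [jTheta, cInf, qpowProd, mul_one]
  rw [← (multipliable_one_sub_mul ha _).tprod_mul (multipliable_one_sub_mul ha _), mul_assoc]

/-- the value of θ'(0,τ) as an infinite product. -/
theorem jTheta_hasDerivAt_zero (τ : ℂ) (hτ : 0 < τ.im) :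
    HasDerivAt (fun v => jTheta v τ)
      (2 * (Real.pi : ℂ) * qpow τ (1 / 8) * ∏' r : ℕ, (1 - qpow τ (r + 1)) ^ 3) 0 := by
  have hF : Differentiable ℂ (qpowProd τ) :=
    differentiable_tprod_one_sub_mul (summable_qpow_nat_add_one hτ)
  have hsin : HasDerivAt (fun v : ℂ ↦ 2 * Complex.sin (Real.pi * v)) (2 * Real.pi) 0 := by
    simpa using ((Complex.hasDerivAt_sin _).comp 0 ((hasDerivAt_id 0).const_mul
      (Real.pi : ℂ))).const_mul 2
  have hprod : DifferentiableAt ℂ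
      (fun v : ℂ ↦ qpowProd τ (Complex.exp (2 * Real.pi * I * v)) *
        qpowProd τ (Complex.exp (-(2 * Real.pi * I * v)))) 0 := by
    fun_prop
  have hθ := (hsin.fun_mul hprod.hasDerivAt).const_mul (qpowProd τ 1 * qpow τ (1 / 8))
  refine (hθ.congr_of_eventuallyEq (.of_forall (jTheta_eq_qpowProd hτ))).congr_deriv ?_
  simp only [mul_zero, exp_zero, neg_zero, sin_zero, zero_mul, add_zero,
    tprod_one_sub_qpow_pow hτ]
  ring
end

section
/- Fix τ in the upper half-plane ℍ, a finite index set I, integers d, ℓ ≥ 1, and integers n_{α,i} (α ∈ I, 1 ≤ i ≤ d) and m_{α,j} (α ∈ I, 1 ≤ j ≤ ℓ). Then for every t ∈ ℂ at which all quantities are defined, the associated functions L_λ satisfy: L₁(t, τ+1) = L₁(t, τ); L₂(t, τ+1) = L₃(t, τ); and L₃(t, τ+1) = L₂(t, τ). -/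
open Complex

/-- The family (θ₁, θ₂, θ₃). -/
noncomputable def thetaFam : Fin 3 → ℂ → ℂ → ℂ := ![jTheta1, jTheta2, jTheta3]

/-- The Lefschetz-number-type function L_λ. -/
noncomputable def Lfun {ι : Type*} [Fintype ι] {d ℓ : ℕ}
    (n : ι → Fin d → ℤ) (m : ι → Fin ℓ → ℤ) (lam : Fin 3) (t τ : ℂ) : ℂ :=
  ∑ α : ι,
    (∑ μ : Fin 3, ∏ i : Fin d,
        jThetaDeriv τ * thetaFam μ ((n α i : ℂ) * t) τ /
          (jTheta ((n α i : ℂ) * t) τ * thetaFam μ 0 τ)) *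
      ∏ j : Fin ℓ, thetaFam lam ((m α j : ℂ) * t) τ / thetaFam lam 0 τ

-- Auxiliary lemmas

lemma qpow_T (τ s : ℂ) : qpow (τ + 1) s = qpow τ s * Complex.exp (2 * Real.pi * I * s) := by
  unfold qpow
  rw [← Complex.exp_add]
  ring_nf

lemma qpow_T_nat (τ : ℂ) (r : ℕ) : qpow (τ + 1) ((r : ℂ) + 1) = qpow τ ((r : ℂ) + 1) := by
  rw [qpow_T]
  have h : Complex.exp (2 * Real.pi * I * ((r : ℂ) + 1)) = 1 := by
    have h1 : (2 : ℂ) * Real.pi * I * ((r : ℂ) + 1)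
        = (((r : ℤ) + 1 : ℤ) : ℂ) * (2 * Real.pi * I) := by push_cast; ring
    rw [h1, Complex.exp_int_mul_two_pi_mul_I]
  rw [h, mul_one]

lemma qpow_T_half (τ : ℂ) (r : ℕ) :
    qpow (τ + 1) ((r : ℂ) + 1 / 2) = - qpow τ ((r : ℂ) + 1 / 2) := by
  rw [qpow_T]
  have h : Complex.exp (2 * Real.pi * I * ((r : ℂ) + 1 / 2)) = -1 := by
    have h1 : (2 : ℂ) * Real.pi * I * ((r : ℂ) + 1 / 2)
        = (r : ℤ) * (2 * Real.pi * I) + Real.pi * I := by push_cast; ring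
    rw [h1, Complex.exp_add, Complex.exp_int_mul_two_pi_mul_I, Complex.exp_pi_mul_I, one_mul]
  rw [h]
  ring

lemma cInf_T (τ : ℂ) : cInf (τ + 1) = cInf τ := by
  unfold cInf
  exact tprod_congr fun r => by simp only [qpow_T_nat]

lemma qpow_eighth_T (τ : ℂ) :
    qpow (τ + 1) (1 / 8) = Complex.exp (Real.pi * I / 4) * qpow τ (1 / 8) := by
  rw [qpow_T, mul_comm]
  congr 2
  ring

lemma jTheta_T (v τ : ℂ) :
    jTheta v (τ + 1) = Complex.exp (Real.pi * I / 4) * jTheta v τ := by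
  unfold jTheta
  rw [cInf_T, qpow_eighth_T,
    tprod_congr (f := fun r : ℕ =>
      (1 - qpow (τ + 1) ((r : ℂ) + 1) * Complex.exp (2 * Real.pi * I * v)) *
        (1 - qpow (τ + 1) ((r : ℂ) + 1) * Complex.exp (-(2 * Real.pi * I * v))))
      (g := fun r : ℕ =>
      (1 - qpow τ ((r : ℂ) + 1) * Complex.exp (2 * Real.pi * I * v)) *
        (1 - qpow τ ((r : ℂ) + 1) * Complex.exp (-(2 * Real.pi * I * v))))
      (fun r => by simp only [qpow_T_nat])]
  ring

lemma jTheta1_T (v τ : ℂ) :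
    jTheta1 v (τ + 1) = Complex.exp (Real.pi * I / 4) * jTheta1 v τ := by
  unfold jTheta1
  rw [cInf_T, qpow_eighth_T,
    tprod_congr (f := fun r : ℕ =>
      (1 + qpow (τ + 1) ((r : ℂ) + 1) * Complex.exp (2 * Real.pi * I * v)) *
        (1 + qpow (τ + 1) ((r : ℂ) + 1) * Complex.exp (-(2 * Real.pi * I * v))))
      (g := fun r : ℕ =>
      (1 + qpow τ ((r : ℂ) + 1) * Complex.exp (2 * Real.pi * I * v)) *
        (1 + qpow τ ((r : ℂ) + 1) * Complex.exp (-(2 * Real.pi * I * v))))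
      (fun r => by simp only [qpow_T_nat])]
  ring

lemma jTheta2_T (v τ : ℂ) : jTheta2 v (τ + 1) = jTheta3 v τ := by
  unfold jTheta2 jTheta3
  rw [cInf_T]
  congr 1
  exact tprod_congr fun r => by simp only [qpow_T_half]; ring

lemma jTheta3_T (v τ : ℂ) : jTheta3 v (τ + 1) = jTheta2 v τ := by
  unfold jTheta2 jTheta3
  rw [cInf_T]
  congr 1
  exact tprod_congr fun r => by simp only [qpow_T_half]; ring

lemma jThetaDeriv_T (τ : ℂ) :
    jThetaDeriv (τ + 1) = Complex.exp (Real.pi * I / 4) * jThetaDeriv τ := by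
  unfold jThetaDeriv
  have h : (fun v => jTheta v (τ + 1))
      = fun v => Complex.exp (Real.pi * I / 4) * jTheta v τ := funext fun v => jTheta_T v τ
  rw [h, deriv_const_mul_field]

lemma cancel_e (e : ℂ) (he : e ≠ 0) (D X Θ Y : ℂ) :
    e * D * X / (e * Θ * Y) = D * X / (Θ * Y) := by
  rw [show e * D * X = e * (D * X) by ring, show e * Θ * Y = e * (Θ * Y) by ring,
    mul_div_mul_left _ _ he]

lemma cancel_ee (e : ℂ) (he : e ≠ 0) (D X Θ Y : ℂ) :
    e * D * (e * X) / (e * Θ * (e * Y)) = D * X / (Θ * Y) := by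
  rw [show e * D * (e * X) = e * e * (D * X) by ring,
    show e * Θ * (e * Y) = e * e * (Θ * Y) by ring,
    mul_div_mul_left _ _ (mul_ne_zero he he)]

/-- behavior of L₁, L₂, L₃ under the modular generator `T : (t,τ) ↦ (t, τ+1)`.
Here `Lfun n m 0`, `Lfun n m 1`, `Lfun n m 2` are L₁, L₂, L₃ respectively. -/
theorem Lfun_modular_T {ι : Type*} [Fintype ι] {d ℓ : ℕ} (hd : 1 ≤ d) (hl : 1 ≤ ℓ)
    (n : ι → Fin d → ℤ) (m : ι → Fin ℓ → ℤ)
    (τ : ℂ) (hτ : 0 < τ.im) (t : ℂ)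
    (h1 : ∀ (α : ι) (i : Fin d), jTheta ((n α i : ℂ) * t) τ ≠ 0)
    (h2 : ∀ (α : ι) (i : Fin d), jTheta ((n α i : ℂ) * t) (τ + 1) ≠ 0) :
    Lfun n m 0 t (τ + 1) = Lfun n m 0 t τ ∧
    Lfun n m 1 t (τ + 1) = Lfun n m 2 t τ ∧
    Lfun n m 2 t (τ + 1) = Lfun n m 1 t τ := by
  have he : Complex.exp ((Real.pi : ℂ) * I / 4) ≠ 0 := Complex.exp_ne_zero _
  have hsum : ∀ α : ι,
      (∑ μ : Fin 3, ∏ i : Fin d,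
        jThetaDeriv (τ + 1) * thetaFam μ ((n α i : ℂ) * t) (τ + 1) /
          (jTheta ((n α i : ℂ) * t) (τ + 1) * thetaFam μ 0 (τ + 1)))
      = ∑ μ : Fin 3, ∏ i : Fin d,
        jThetaDeriv τ * thetaFam μ ((n α i : ℂ) * t) τ /
          (jTheta ((n α i : ℂ) * t) τ * thetaFam μ 0 τ) := by
    intro α
    rw [Fin.sum_univ_three, Fin.sum_univ_three]
    simp only [thetaFam, Matrix.cons_val_zero, Matrix.cons_val_one, Matrix.head_cons,
      Matrix.cons_val_two, Matrix.tail_cons]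
    have t0 : (∏ i : Fin d, jThetaDeriv (τ + 1) * jTheta1 ((n α i : ℂ) * t) (τ + 1) /
          (jTheta ((n α i : ℂ) * t) (τ + 1) * jTheta1 0 (τ + 1)))
        = ∏ i : Fin d, jThetaDeriv τ * jTheta1 ((n α i : ℂ) * t) τ /
          (jTheta ((n α i : ℂ) * t) τ * jTheta1 0 τ) :=
      Finset.prod_congr rfl fun i _ => by
        rw [jThetaDeriv_T, jTheta1_T, jTheta1_T, jTheta_T, cancel_ee _ he]
    have t1 : (∏ i : Fin d, jThetaDeriv (τ + 1) * jTheta2 ((n α i : ℂ) * t) (τ + 1) /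
          (jTheta ((n α i : ℂ) * t) (τ + 1) * jTheta2 0 (τ + 1)))
        = ∏ i : Fin d, jThetaDeriv τ * jTheta3 ((n α i : ℂ) * t) τ /
          (jTheta ((n α i : ℂ) * t) τ * jTheta3 0 τ) :=
      Finset.prod_congr rfl fun i _ => by
        rw [jThetaDeriv_T, jTheta2_T, jTheta2_T, jTheta_T, cancel_e _ he]
    have t2 : (∏ i : Fin d, jThetaDeriv (τ + 1) * jTheta3 ((n α i : ℂ) * t) (τ + 1) /
          (jTheta ((n α i : ℂ) * t) (τ + 1) * jTheta3 0 (τ + 1)))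
        = ∏ i : Fin d, jThetaDeriv τ * jTheta2 ((n α i : ℂ) * t) τ /
          (jTheta ((n α i : ℂ) * t) τ * jTheta2 0 τ) :=
      Finset.prod_congr rfl fun i _ => by
        rw [jThetaDeriv_T, jTheta3_T, jTheta3_T, jTheta_T, cancel_e _ he]
    rw [t0, t1, t2]
    ring
  refine ⟨?_, ?_, ?_⟩ <;>
    refine Finset.sum_congr rfl fun α _ => by
      rw [hsum α]
      congr 1
      refine Finset.prod_congr rfl fun j _ => ?_
      simp only [thetaFam, Matrix.cons_val_zero, Matrix.cons_val_one, Matrix.head_cons,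
        Matrix.cons_val_two, Matrix.tail_cons]
      first
      | rw [jTheta1_T, jTheta1_T, mul_div_mul_left _ _ he]
      | rw [jTheta2_T, jTheta2_T]
      | rw [jTheta3_T, jTheta3_T]
end
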